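/- arXiv:2410.21694 — 2 statements merged into one kernel-verified Lean document; each statement's English description precedes it below -/
import Mathlib

section
/- For any ε > 0, there exists n ∈ ℕ such that for every extreme point μ of η^∞_{ρ,Π} there exists a finite sequence of signals s^n = (s_1, …, s_n) ∈ S^n satisfying ‖r_{ρ,Π}(s^n|μ') − μ‖ < ε for every initial belief μ' ∈ Δ(Θ) (with ‖·‖ the Euclidean norm on ℝ^Θ); in particular n can be chosen uniformly over all extreme points of η^∞_{ρ,Π}. -/
/-- One-step belief update r_{ρ,Π}(s|μ): here ρ θ θ' denotes the transition
probability ρ(θ'|θ) from θ to θ'. -/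
noncomputable def update {Θ S : Type*} [Fintype Θ] (π : S → Θ → ℝ) (ρ : Θ → Θ → ℝ)
    (s : S) (μ : Θ → ℝ) : Θ → ℝ :=
  fun θ' => π s θ' * (∑ θ, ρ θ θ' * μ θ) / ∑ θ'', π s θ'' * ∑ θ, ρ θ θ'' * μ θ

/-- The map η_{ρ,Π} on subsets of beliefs:
η(X) = conv({ r_{ρ,Π}(s|μ) : s ∈ S, μ ∈ X }). -/
noncomputable def etaMap {Θ S : Type*} [Fintype Θ] (π : S → Θ → ℝ) (ρ : Θ → Θ → ℝ)
    (X : Set (Θ → ℝ)) : Set (Θ → ℝ) :=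
  convexHull ℝ {ν : Θ → ℝ | ∃ s : S, ∃ μ ∈ X, ν = update π ρ s μ}

/-- η^∞_{ρ,Π} = ⋂_{n ≥ 1} η^n_{ρ,Π}(Δ(Θ)). -/
noncomputable def etaInf {Θ S : Type*} [Fintype Θ] (π : S → Θ → ℝ) (ρ : Θ → Θ → ℝ) :
    Set (Θ → ℝ) :=
  ⋂ n : ℕ, (etaMap π ρ)^[n + 1] (stdSimplex ℝ Θ)

/-- The belief after observing a finite sequence of signals (applied in order). -/
noncomputable def updateSeq {Θ S : Type*} [Fintype Θ] (π : S → Θ → ℝ) (ρ : Θ → Θ → ℝ)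
    (l : List S) (μ : Θ → ℝ) : Θ → ℝ :=
  l.foldl (fun ν s => update π ρ s ν) μ

namespace LemD2

open Finset Pointwise

variable {Θ S : Type*} [Fintype Θ] [Nonempty Θ] [Fintype S] [Nonempty S]

/-- the mixing (prediction) step -/
def mix (ρ : Θ → Θ → ℝ) (μ : Θ → ℝ) : Θ → ℝ := fun θ' => ∑ θ, ρ θ θ' * μ θ

/-- normalization constant -/
def Znorm (π : S → Θ → ℝ) (ρ : Θ → Θ → ℝ) (s : S) (μ : Θ → ℝ) : ℝ :=
  ∑ θ'', π s θ'' * mix ρ μ θ''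

set_option linter.unusedSectionVars false in
lemma update_apply (π : S → Θ → ℝ) (ρ : Θ → Θ → ℝ) (s : S) (μ : Θ → ℝ) (θ' : Θ) :
    update π ρ s μ θ' = π s θ' * mix ρ μ θ' / Znorm π ρ s μ := rfl

noncomputable def dmin (ρ : Θ → Θ → ℝ) : ℝ :=
  Finset.univ.inf' Finset.univ_nonempty (fun p : Θ × Θ => ρ p.1 p.2)

noncomputable def pmin (π : S → Θ → ℝ) : ℝ :=
  Finset.univ.inf' Finset.univ_nonempty (fun p : S × Θ => π p.1 p.2)

variable {π : S → Θ → ℝ} {ρ : Θ → Θ → ℝ}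

/-- Bundle of the standing hypotheses. -/
structure Hyp (π : S → Θ → ℝ) (ρ : Θ → Θ → ℝ) : Prop where
  hπ0 : ∀ s θ, 0 < π s θ
  hπ1 : ∀ θ, ∑ s, π s θ = 1
  hρ0 : ∀ θ θ', 0 < ρ θ θ'
  hρ1 : ∀ θ, ∑ θ', ρ θ θ' = 1

lemma dmin_le (ρ : Θ → Θ → ℝ) (θ θ' : Θ) : dmin ρ ≤ ρ θ θ' :=
  Finset.inf'_le _ (Finset.mem_univ (θ, θ'))

lemma pmin_le (π : S → Θ → ℝ) (s : S) (θ : Θ) : pmin π ≤ π s θ :=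
  Finset.inf'_le _ (Finset.mem_univ (s, θ))

lemma dmin_mul_sum_le_mix {μ : Θ → ℝ} (hμ : ∀ θ, 0 ≤ μ θ) (θ' : Θ) :
    dmin ρ * ∑ θ, μ θ ≤ mix ρ μ θ' := by
  rw [Finset.mul_sum]
  exact Finset.sum_le_sum fun θ _ => mul_le_mul_of_nonneg_right (dmin_le ρ θ θ') (hμ θ)

variable (H : Hyp π ρ)

set_option linter.unusedSectionVars false

include H

lemma Hyp.dmin_pos : 0 < dmin ρ := by
  rw [dmin, Finset.lt_inf'_iff]
  exact fun b _ => H.hρ0 b.1 b.2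

lemma Hyp.pmin_pos : 0 < pmin π := by
  rw [pmin, Finset.lt_inf'_iff]
  exact fun b _ => H.hπ0 b.1 b.2

lemma Hyp.rho_le_one (θ θ' : Θ) : ρ θ θ' ≤ 1 := by
  calc ρ θ θ' ≤ ∑ θ'', ρ θ θ'' :=
        Finset.single_le_sum (fun i _ => (H.hρ0 θ i).le) (Finset.mem_univ θ')
    _ = 1 := H.hρ1 θ

lemma Hyp.pi_le_one (s : S) (θ : Θ) : π s θ ≤ 1 := by
  calc π s θ ≤ ∑ s', π s' θ :=
        Finset.single_le_sum (fun i _ => (H.hπ0 i θ).le) (Finset.mem_univ s)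
    _ = 1 := H.hπ1 θ

lemma Hyp.dmin_le_one : dmin ρ ≤ 1 := by
  obtain ⟨θ⟩ := (inferInstance : Nonempty Θ)
  exact (dmin_le ρ θ θ).trans (H.rho_le_one θ θ)

lemma Hyp.mix_pos {μ : Θ → ℝ} (hμ : ∀ θ, 0 < μ θ) (θ' : Θ) : 0 < mix ρ μ θ' :=
  Finset.sum_pos (fun θ _ => mul_pos (H.hρ0 θ θ') (hμ θ)) ⟨Classical.arbitrary Θ, Finset.mem_univ _⟩

lemma Hyp.mix_le_sum {μ : Θ → ℝ} (hμ : ∀ θ, 0 ≤ μ θ) (θ' : Θ) : mix ρ μ θ' ≤ ∑ θ, μ θ :=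
  Finset.sum_le_sum fun θ _ => by
    calc ρ θ θ' * μ θ ≤ 1 * μ θ :=
      mul_le_mul_of_nonneg_right (H.rho_le_one θ θ') (hμ θ)
    _ = μ θ := one_mul _

lemma Hyp.mix_ge_dmin {μ : Θ → ℝ} (hμ : μ ∈ stdSimplex ℝ Θ) (θ' : Θ) :
    dmin ρ ≤ mix ρ μ θ' := by
  have h := dmin_mul_sum_le_mix (ρ := ρ) hμ.1 θ'
  rwa [hμ.2, mul_one] at h

lemma Hyp.mix_pos_of_simplex {μ : Θ → ℝ} (hμ : μ ∈ stdSimplex ℝ Θ) (θ' : Θ) :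
    0 < mix ρ μ θ' :=
  lt_of_lt_of_le H.dmin_pos (H.mix_ge_dmin hμ θ')

lemma Hyp.mix_le_one_of_simplex {μ : Θ → ℝ} (hμ : μ ∈ stdSimplex ℝ Θ) (θ' : Θ) :
    mix ρ μ θ' ≤ 1 := by
  have h := H.mix_le_sum hμ.1 θ'
  rwa [hμ.2] at h

lemma Hyp.Znorm_ge {s : S} {μ : Θ → ℝ} (hμ : μ ∈ stdSimplex ℝ Θ) :
    pmin π * dmin ρ ≤ Znorm π ρ s μ := by
  obtain ⟨θ₀⟩ := (inferInstance : Nonempty Θ)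
  have h1 : pmin π * dmin ρ ≤ π s θ₀ * mix ρ μ θ₀ :=
    mul_le_mul (pmin_le π s θ₀) (H.mix_ge_dmin hμ θ₀) H.dmin_pos.le (H.hπ0 s θ₀).le
  refine h1.trans ?_
  exact Finset.single_le_sum
    (fun θ'' _ => mul_nonneg (H.hπ0 s θ'').le (H.mix_pos_of_simplex hμ θ'').le)
    (Finset.mem_univ θ₀)

lemma Hyp.Znorm_pos_of_simplex {s : S} {μ : Θ → ℝ} (hμ : μ ∈ stdSimplex ℝ Θ) :
    0 < Znorm π ρ s μ :=
  lt_of_lt_of_le (mul_pos H.pmin_pos H.dmin_pos) (H.Znorm_ge hμ)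

lemma Hyp.Znorm_pos_of_pos {s : S} {μ : Θ → ℝ} (hμ : ∀ θ, 0 < μ θ) :
    0 < Znorm π ρ s μ :=
  Finset.sum_pos (fun θ'' _ => mul_pos (H.hπ0 s θ'') (H.mix_pos hμ θ''))
    ⟨Classical.arbitrary Θ, Finset.mem_univ _⟩

lemma Hyp.Znorm_le {s : S} {μ : Θ → ℝ} (hμ : μ ∈ stdSimplex ℝ Θ) :
    Znorm π ρ s μ ≤ (Fintype.card Θ : ℝ) := by
  rw [Znorm]
  calc ∑ θ'', π s θ'' * mix ρ μ θ'' ≤ ∑ _θ'' : Θ, 1 := by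
        apply Finset.sum_le_sum
        intro θ'' _
        calc π s θ'' * mix ρ μ θ'' ≤ 1 * 1 :=
              mul_le_mul (H.pi_le_one s θ'') (H.mix_le_one_of_simplex hμ θ'')
                (H.mix_pos_of_simplex hμ θ'').le zero_le_one
          _ = 1 := one_mul 1
    _ = (Fintype.card Θ : ℝ) := by simp

lemma Hyp.update_mem_simplex {s : S} {μ : Θ → ℝ} (hμ : μ ∈ stdSimplex ℝ Θ) :
    update π ρ s μ ∈ stdSimplex ℝ Θ := by
  constructor
  · intro θ'
    rw [update_apply]
    exact div_nonneg (mul_nonneg (H.hπ0 s θ').le (H.mix_pos_of_simplex hμ θ').le)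
      (H.Znorm_pos_of_simplex hμ).le
  · have hZ := H.Znorm_pos_of_simplex (s := s) hμ
    simp only [update_apply]
    rw [← Finset.sum_div]
    exact div_self hZ.ne'

lemma Hyp.update_pos_of_pos {s : S} {μ : Θ → ℝ} (hμ : ∀ θ, 0 < μ θ) (θ' : Θ) :
    0 < update π ρ s μ θ' := by
  rw [update_apply]
  exact div_pos (mul_pos (H.hπ0 s θ') (H.mix_pos hμ θ')) (H.Znorm_pos_of_pos hμ)

/-- uniform coordinate lower bound after one update -/
noncomputable def cmin (π : S → Θ → ℝ) (ρ : Θ → Θ → ℝ) : ℝ :=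
  pmin π * dmin ρ / (Fintype.card Θ : ℝ)

lemma Hyp.cmin_pos : 0 < cmin π ρ :=
  div_pos (mul_pos H.pmin_pos H.dmin_pos) (by positivity)

lemma Hyp.cmin_le_update {s : S} {μ : Θ → ℝ} (hμ : μ ∈ stdSimplex ℝ Θ) (θ' : Θ) :
    cmin π ρ ≤ update π ρ s μ θ' := by
  rw [update_apply, cmin]
  apply div_le_div₀ (mul_nonneg (H.hπ0 s θ').le (H.mix_pos_of_simplex hμ θ').le)
  · exact mul_le_mul (pmin_le π s θ') (H.mix_ge_dmin hμ θ') H.dmin_pos.le (H.hπ0 s θ').le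
  · exact H.Znorm_pos_of_simplex hμ
  · exact H.Znorm_le hμ

lemma Hyp.update_le_one {s : S} {μ : Θ → ℝ} (hμ : μ ∈ stdSimplex ℝ Θ) (θ' : Θ) :
    update π ρ s μ θ' ≤ 1 := by
  have h := H.update_mem_simplex (s := s) hμ
  calc update π ρ s μ θ' ≤ ∑ θ, update π ρ s μ θ :=
        Finset.single_le_sum (fun θ _ => h.1 θ) (Finset.mem_univ θ')
    _ = 1 := h.2

omit H in
lemma simplex_coord_le_one {μ : Θ → ℝ} (hμ : μ ∈ stdSimplex ℝ Θ) (θ : Θ) : μ θ ≤ 1 := by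
  calc μ θ ≤ ∑ θ', μ θ' := Finset.single_le_sum (fun i _ => hμ.1 i) (Finset.mem_univ θ)
    _ = 1 := hμ.2

omit H

lemma updateSeq_nil (μ : Θ → ℝ) : updateSeq π ρ [] μ = μ := rfl

lemma updateSeq_cons (s : S) (l : List S) (μ : Θ → ℝ) :
    updateSeq π ρ (s :: l) μ = updateSeq π ρ l (update π ρ s μ) := rfl

include H

lemma Hyp.updateSeq_mem_simplex (l : List S) {μ : Θ → ℝ} (hμ : μ ∈ stdSimplex ℝ Θ) :
    updateSeq π ρ l μ ∈ stdSimplex ℝ Θ := by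
  induction l generalizing μ with
  | nil => exact hμ
  | cons s l ih => exact ih (H.update_mem_simplex hμ)

lemma Hyp.updateSeq_pos (l : List S) {μ : Θ → ℝ} (hμ : ∀ θ, 0 < μ θ) (θ : Θ) :
    0 < updateSeq π ρ l μ θ := by
  induction l generalizing μ with
  | nil => exact hμ θ
  | cons s l ih => exact ih (H.update_pos_of_pos hμ)

/-! ### The Hilbert-metric style contraction -/

noncomputable def rsup (x y : Θ → ℝ) : ℝ :=
  Finset.univ.sup' Finset.univ_nonempty (fun θ => x θ / y θ)

noncomputable def rinf (x y : Θ → ℝ) : ℝ :=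
  Finset.univ.inf' Finset.univ_nonempty (fun θ => x θ / y θ)

/-- ratio spread (Hilbert metric quantity) -/
noncomputable def Rrat (x y : Θ → ℝ) : ℝ := rsup x y / rinf x y

omit H

lemma rsup_def (x y : Θ → ℝ) :
    rsup x y = Finset.univ.sup' Finset.univ_nonempty (fun θ => x θ / y θ) := rfl

lemma rinf_def (x y : Θ → ℝ) :
    rinf x y = Finset.univ.inf' Finset.univ_nonempty (fun θ => x θ / y θ) := rfl

lemma Rrat_def (x y : Θ → ℝ) : Rrat x y = rsup x y / rinf x y := rfl

lemma rinf_le (x y : Θ → ℝ) (θ : Θ) : rinf x y ≤ x θ / y θ := by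
  rw [rinf_def]; exact Finset.inf'_le _ (Finset.mem_univ θ)

lemma le_rsup (x y : Θ → ℝ) (θ : Θ) : x θ / y θ ≤ rsup x y := by
  rw [rsup_def]; exact Finset.le_sup' (fun θ => x θ / y θ) (Finset.mem_univ θ)

lemma rinf_le_rsup (x y : Θ → ℝ) : rinf x y ≤ rsup x y :=
  (rinf_le x y (Classical.arbitrary Θ)).trans (le_rsup x y (Classical.arbitrary Θ))

lemma rinf_pos {x y : Θ → ℝ} (hx : ∀ θ, 0 < x θ) (hy : ∀ θ, 0 < y θ) : 0 < rinf x y := by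
  rw [rinf_def, Finset.lt_inf'_iff]
  exact fun θ _ => div_pos (hx θ) (hy θ)

lemma rsup_pos {x y : Θ → ℝ} (hx : ∀ θ, 0 < x θ) (hy : ∀ θ, 0 < y θ) : 0 < rsup x y :=
  lt_of_lt_of_le (rinf_pos hx hy) (rinf_le_rsup x y)

lemma one_le_Rrat {x y : Θ → ℝ} (hx : ∀ θ, 0 < x θ) (hy : ∀ θ, 0 < y θ) : 1 ≤ Rrat x y :=
  (one_le_div (rinf_pos hx hy)).2 (rinf_le_rsup x y)

lemma rinf_mul_le {x y : Θ → ℝ} (hy : ∀ θ, 0 < y θ) (θ : Θ) : rinf x y * y θ ≤ x θ :=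
  (le_div_iff₀ (hy θ)).1 (rinf_le x y θ)

lemma le_rsup_mul {x y : Θ → ℝ} (hy : ∀ θ, 0 < y θ) (θ : Θ) : x θ ≤ rsup x y * y θ :=
  (div_le_iff₀ (hy θ)).1 (le_rsup x y θ)

include H

lemma Hyp.contract_step {x y : Θ → ℝ} (hx : ∀ θ, 0 < x θ) (hy : ∀ θ, 0 < y θ) (s : S) :
    Rrat (update π ρ s x) (update π ρ s y) ≤ (1 - dmin ρ) * Rrat x y + dmin ρ := by
  simp only [Rrat_def]
  set δ := dmin ρ with hδdef
  have hδ0 : 0 < δ := H.dmin_pos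
  have hδ1 : δ ≤ 1 := H.dmin_le_one
  set m := rinf x y with hmdef
  set M := rsup x y with hMdef
  have hm0 : 0 < m := rinf_pos hx hy
  have hM0 : 0 < M := rsup_pos hx hy
  have hmM : m ≤ M := rinf_le_rsup x y
  set X := ∑ θ, x θ with hXdef
  set Y := ∑ θ, y θ with hYdef
  have hY0 : 0 < Y := Finset.sum_pos (fun θ _ => hy θ) ⟨Classical.arbitrary Θ, Finset.mem_univ _⟩
  have hsubm : ∀ θ, 0 ≤ x θ - m * y θ := fun θ => sub_nonneg.2 (rinf_mul_le hy θ)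
  have hsubM : ∀ θ, 0 ≤ M * y θ - x θ := fun θ => sub_nonneg.2 (le_rsup_mul hy θ)
  have hu : 0 ≤ X - m * Y := by
    rw [hXdef, hYdef, Finset.mul_sum, ← Finset.sum_sub_distrib]
    exact Finset.sum_nonneg fun θ _ => hsubm θ
  have hv : 0 ≤ M * Y - X := by
    rw [hXdef, hYdef, Finset.mul_sum, ← Finset.sum_sub_distrib]
    exact Finset.sum_nonneg fun θ _ => hsubM θ
  -- key coordinatewise estimates on the mixed beliefs
  have key1 : ∀ θ', m * mix ρ y θ' + δ * (X - m * Y) ≤ mix ρ x θ' := by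
    intro θ'
    have h1 : mix ρ x θ' - m * mix ρ y θ' = ∑ θ, ρ θ θ' * (x θ - m * y θ) := by
      simp only [mix]
      rw [Finset.mul_sum, ← Finset.sum_sub_distrib]
      exact Finset.sum_congr rfl fun θ _ => by ring
    have h2 : δ * (X - m * Y) = ∑ θ, δ * (x θ - m * y θ) := by
      rw [hXdef, hYdef, Finset.mul_sum, ← Finset.sum_sub_distrib, Finset.mul_sum]
    have h3 : ∑ θ, δ * (x θ - m * y θ) ≤ ∑ θ, ρ θ θ' * (x θ - m * y θ) :=
      Finset.sum_le_sum fun θ _ => mul_le_mul_of_nonneg_right (dmin_le ρ θ θ') (hsubm θ)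
    linarith [h3, h1.ge, h2.le]
  have key2 : ∀ θ', mix ρ x θ' ≤ M * mix ρ y θ' - δ * (M * Y - X) := by
    intro θ'
    have h1 : M * mix ρ y θ' - mix ρ x θ' = ∑ θ, ρ θ θ' * (M * y θ - x θ) := by
      simp only [mix]
      rw [Finset.mul_sum, ← Finset.sum_sub_distrib]
      exact Finset.sum_congr rfl fun θ _ => by ring
    have h2 : δ * (M * Y - X) = ∑ θ, δ * (M * y θ - x θ) := by
      rw [hXdef, hYdef, Finset.mul_sum, ← Finset.sum_sub_distrib, Finset.mul_sum]
    have h3 : ∑ θ, δ * (M * y θ - x θ) ≤ ∑ θ, ρ θ θ' * (M * y θ - x θ) :=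
      Finset.sum_le_sum fun θ _ => mul_le_mul_of_nonneg_right (dmin_le ρ θ θ') (hsubM θ)
    linarith [h3, h1.ge, h2.le]
  have hmixy_pos : ∀ θ', 0 < mix ρ y θ' := H.mix_pos hy
  have hmixx_pos : ∀ θ', 0 < mix ρ x θ' := H.mix_pos hx
  have hmixyY : ∀ θ', mix ρ y θ' ≤ Y := H.mix_le_sum (fun θ => (hy θ).le)
  set A := M - δ * (M * Y - X) / Y with hAdef
  set B := m + δ * (X - m * Y) / Y with hBdef
  have hB0 : 0 < B := by
    have : 0 ≤ δ * (X - m * Y) / Y := div_nonneg (mul_nonneg hδ0.le hu) hY0.le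
    rw [hBdef]; linarith
  -- coordinatewise bounds on the ratio of mixed beliefs
  have hup : ∀ θ', mix ρ x θ' / mix ρ y θ' ≤ A := by
    intro θ'
    rw [div_le_iff₀ (hmixy_pos θ')]
    have h1 : δ * (M * Y - X) / Y * mix ρ y θ' ≤ δ * (M * Y - X) := by
      rw [div_mul_eq_mul_div, div_le_iff₀ hY0]
      exact mul_le_mul_of_nonneg_left (hmixyY θ') (mul_nonneg hδ0.le hv)
    have h2 := key2 θ'
    have h3 : A * mix ρ y θ' = M * mix ρ y θ' - δ * (M * Y - X) / Y * mix ρ y θ' := by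
      rw [hAdef]; ring
    rw [h3]
    linarith [h1, h2]
  have hlo : ∀ θ', B ≤ mix ρ x θ' / mix ρ y θ' := by
    intro θ'
    rw [le_div_iff₀ (hmixy_pos θ')]
    have h1 : δ * (X - m * Y) / Y * mix ρ y θ' ≤ δ * (X - m * Y) := by
      rw [div_mul_eq_mul_div, div_le_iff₀ hY0]
      exact mul_le_mul_of_nonneg_left (hmixyY θ') (mul_nonneg hδ0.le hu)
    have h2 := key1 θ'
    have h3 : B * mix ρ y θ' = m * mix ρ y θ' + δ * (X - m * Y) / Y * mix ρ y θ' := by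
      rw [hBdef]; ring
    rw [h3]
    linarith [h1, h2]
  have hBA : B ≤ A := le_trans (hlo (Classical.arbitrary Θ)) (hup (Classical.arbitrary Θ))
  -- the ratio of the updates equals the ratio of the mixes times a constant
  set C := Znorm π ρ s y / Znorm π ρ s x with hCdef
  have hZx : 0 < Znorm π ρ s x := H.Znorm_pos_of_pos hx
  have hZy : 0 < Znorm π ρ s y := H.Znorm_pos_of_pos hy
  have hC0 : 0 < C := div_pos hZy hZx
  have hratio : ∀ θ', update π ρ s x θ' / update π ρ s y θ' =
      mix ρ x θ' / mix ρ y θ' * C := by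
    intro θ'
    rw [update_apply, update_apply, hCdef]
    have h1 : π s θ' ≠ 0 := (H.hπ0 s θ').ne'
    have h2 : Znorm π ρ s x ≠ 0 := hZx.ne'
    have h3 : Znorm π ρ s y ≠ 0 := hZy.ne'
    have h4 : mix ρ y θ' ≠ 0 := (hmixy_pos θ').ne'
    field_simp
  have hsup_le : rsup (update π ρ s x) (update π ρ s y) ≤ A * C := by
    rw [rsup_def]
    apply Finset.sup'_le
    intro θ' _
    rw [hratio θ']
    exact mul_le_mul_of_nonneg_right (hup θ') hC0.le
  have hinf_ge : B * C ≤ rinf (update π ρ s x) (update π ρ s y) := by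
    rw [rinf_def]
    apply Finset.le_inf'
    intro θ' _
    rw [hratio θ']
    exact mul_le_mul_of_nonneg_right (hlo θ') hC0.le
  have hAC0 : 0 ≤ A * C := le_trans (mul_nonneg hB0.le hC0.le) (mul_le_mul_of_nonneg_right hBA hC0.le)
  have hRle : rsup (update π ρ s x) (update π ρ s y) / rinf (update π ρ s x) (update π ρ s y)
      ≤ A / B := by
    have h1 : rsup (update π ρ s x) (update π ρ s y) / rinf (update π ρ s x) (update π ρ s y)
        ≤ (A * C) / (B * C) := div_le_div₀ hAC0 hsup_le (mul_pos hB0 hC0) hinf_ge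
    rwa [mul_div_mul_right _ _ hC0.ne'] at h1
  refine hRle.trans ?_
  -- final algebraic inequality
  rw [div_le_iff₀ hB0]
  set K := (1 - δ) * (M / m) + δ with hKdef
  have hK1 : 1 ≤ K := by
    have h1 : 1 ≤ M / m := (one_le_div hm0).2 hmM
    have h2 : (1 - δ) * 1 ≤ (1 - δ) * (M / m) := mul_le_mul_of_nonneg_left h1 (by linarith)
    rw [hKdef]
    linarith
  have hKm : K * m = (1 - δ) * M + δ * m := by
    rw [hKdef]
    field_simp [hm0.ne']
  have huv : δ * (X - m * Y) / Y + δ * (M * Y - X) / Y = δ * (M - m) := by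
    field_simp [hY0.ne']
    ring
  have h2 : δ * (X - m * Y) / Y ≤ K * (δ * (X - m * Y) / Y) :=
    le_mul_of_one_le_left (div_nonneg (mul_nonneg hδ0.le hu) hY0.le) hK1
  rw [hAdef, hBdef, mul_add, hKm]
  nlinarith [h2, huv]

lemma Hyp.contract_seq (l : List S) {x y : Θ → ℝ} (hx : ∀ θ, 0 < x θ) (hy : ∀ θ, 0 < y θ) :
    Rrat (updateSeq π ρ l x) (updateSeq π ρ l y) - 1 ≤
      (1 - dmin ρ) ^ l.length * (Rrat x y - 1) := by
  induction l generalizing x y with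
  | nil => simp [updateSeq_nil]
  | cons s l ih =>
    have hδ0 : 0 < dmin ρ := H.dmin_pos
    have hδ1 : dmin ρ ≤ 1 := H.dmin_le_one
    have hx' := fun θ => H.update_pos_of_pos hx θ (s := s)
    have hy' := fun θ => H.update_pos_of_pos hy θ (s := s)
    have h1 := ih hx' hy'
    have h2 : Rrat (update π ρ s x) (update π ρ s y) - 1 ≤ (1 - dmin ρ) * (Rrat x y - 1) := by
      have := H.contract_step hx hy s
      nlinarith [this]
    calc Rrat (updateSeq π ρ (s :: l) x) (updateSeq π ρ (s :: l) y) - 1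
        = Rrat (updateSeq π ρ l (update π ρ s x)) (updateSeq π ρ l (update π ρ s y)) - 1 := by
          rw [updateSeq_cons, updateSeq_cons]
      _ ≤ (1 - dmin ρ) ^ l.length * (Rrat (update π ρ s x) (update π ρ s y) - 1) := h1
      _ ≤ (1 - dmin ρ) ^ l.length * ((1 - dmin ρ) * (Rrat x y - 1)) :=
          mul_le_mul_of_nonneg_left h2 (pow_nonneg (by linarith) _)
      _ = (1 - dmin ρ) ^ (s :: l).length * (Rrat x y - 1) := by
          rw [List.length_cons, pow_succ]; ring

lemma Hyp.init_R {x y : Θ → ℝ} (hx : x ∈ stdSimplex ℝ Θ) (hy : y ∈ stdSimplex ℝ Θ) (s : S) :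
    Rrat (update π ρ s x) (update π ρ s y) ≤ 1 / (cmin π ρ) ^ 2 := by
  have hc0 : 0 < cmin π ρ := H.cmin_pos
  have hsup : rsup (update π ρ s x) (update π ρ s y) ≤ 1 / cmin π ρ := by
    rw [rsup_def]
    apply Finset.sup'_le
    intro θ _
    exact div_le_div₀ zero_le_one (H.update_le_one hx θ) hc0 (H.cmin_le_update hy θ)
  have hinf : cmin π ρ ≤ rinf (update π ρ s x) (update π ρ s y) := by
    rw [rinf_def]
    apply Finset.le_inf'
    intro θ _
    rw [le_div_iff₀ (lt_of_lt_of_le hc0 (H.cmin_le_update hy θ))]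
    calc cmin π ρ * update π ρ s y θ ≤ cmin π ρ * 1 :=
          mul_le_mul_of_nonneg_left (H.update_le_one hy θ) hc0.le
      _ = cmin π ρ := mul_one _
      _ ≤ update π ρ s x θ := H.cmin_le_update hx θ
  rw [Rrat_def]
  calc rsup (update π ρ s x) (update π ρ s y) / rinf (update π ρ s x) (update π ρ s y)
      ≤ (1 / cmin π ρ) / cmin π ρ := div_le_div₀ (by positivity) hsup hc0 hinf
    _ = 1 / (cmin π ρ) ^ 2 := by rw [div_div, ← sq]

lemma Hyp.close_of_R {x y : Θ → ℝ} (hxS : x ∈ stdSimplex ℝ Θ) (hyS : y ∈ stdSimplex ℝ Θ)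
    (hx : ∀ θ, 0 < x θ) (hy : ∀ θ, 0 < y θ) {e : ℝ} (he : 0 ≤ e)
    (hR : Rrat x y ≤ 1 + e) (θ : Θ) : |x θ - y θ| ≤ e := by
  set m := rinf x y with hmdef
  set M := rsup x y with hMdef
  have hm0 : 0 < m := rinf_pos hx hy
  have hm1 : m ≤ 1 := by
    have h1 : ∑ θ', m * y θ' ≤ ∑ θ', x θ' := Finset.sum_le_sum fun θ' _ => rinf_mul_le hy θ'
    rw [hxS.2, ← Finset.mul_sum, hyS.2, mul_one] at h1
    exact h1
  have hM1 : 1 ≤ M := by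
    have h1 : ∑ θ', x θ' ≤ ∑ θ', M * y θ' := Finset.sum_le_sum fun θ' _ => le_rsup_mul hy θ'
    rw [hxS.2, ← Finset.mul_sum, hyS.2, mul_one] at h1
    exact h1
  have hMm : M ≤ (1 + e) * m := by
    rw [Rrat_def] at hR
    have := (div_le_iff₀ hm0).1 hR
    linarith
  have hyθ1 : y θ ≤ 1 := simplex_coord_le_one hyS θ
  have hub : x θ ≤ M * y θ := le_rsup_mul hy θ
  have hlb : m * y θ ≤ x θ := rinf_mul_le hy θ
  have hy0 : 0 ≤ y θ := (hy θ).le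
  rw [abs_le]
  constructor
  · -- y θ - x θ ≤ e, i.e. -e ≤ x θ - y θ
    have h1 : 1 - m ≤ e := by nlinarith
    nlinarith
  · have h2 : M - 1 ≤ e := by nlinarith
    nlinarith

/-! ### Compactness of convex hulls (Carathéodory) -/

omit H

section carath

variable (Θ) in
/-- padded convex-combination parametrization domain -/
def CaraDom : Set ((Fin (Fintype.card Θ + 1) → ℝ) × (Fin (Fintype.card Θ + 1) → (Θ → ℝ))) :=
  (stdSimplex ℝ (Fin (Fintype.card Θ + 1))) ×ˢ (Set.univ.pi fun _ => Set.univ)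

lemma pad_sum {ι : Type*} [Fintype ι] [Nonempty ι] {Mo : Type*} [AddCommMonoid Mo]
    {D : ℕ} (hD : Fintype.card ι ≤ D) (G : ι → Mo) :
    ∑ j : Fin D, (if h : (j : ℕ) < Fintype.card ι
        then G ((Fintype.equivFin ι).symm ⟨j, h⟩) else 0) = ∑ i : ι, G i := by
  classical
  set k := Fintype.card ι with hk
  have hk0 : 0 < k := Fintype.card_pos
  set e := Fintype.equivFin ι with he
  set F : ℕ → Mo := fun j => if h : j < k then G (e.symm ⟨j, h⟩) else 0 with hF
  have h1 : ∑ j : Fin D, (if h : (j : ℕ) < k then G (e.symm ⟨j, h⟩) else 0)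
      = ∑ j ∈ Finset.range D, F j := by
    rw [← Fin.sum_univ_eq_sum_range]
  rw [h1]
  have h2 : ∑ j ∈ Finset.range D, F j = ∑ j ∈ Finset.range k, F j := by
    rw [Finset.sum_subset (Finset.range_subset_range.2 hD)]
    intro j _ hj
    rw [Finset.mem_range, not_lt] at hj
    simp only [hF, dif_neg (not_lt.2 hj)]
  rw [h2, ← Fin.sum_univ_eq_sum_range]
  have h3 : ∀ j : Fin k, F j = G (e.symm j) := by
    intro j
    simp only [hF, dif_pos j.2]
    rfl
  rw [Finset.sum_congr rfl fun j _ => h3 j]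
  exact Equiv.sum_comp e.symm G

lemma pad_sum' {ι : Type*} [Fintype ι] [Nonempty ι] {Mo : Type*} [AddCommMonoid Mo]
    {D : ℕ} (hD : Fintype.card ι ≤ D) (G : ι → Mo) :
    ∑ j : Fin D, (if (j : ℕ) < Fintype.card ι
        then G ((Fintype.equivFin ι).symm
          ⟨(j : ℕ) % Fintype.card ι, Nat.mod_lt _ Fintype.card_pos⟩) else 0)
      = ∑ i : ι, G i := by
  rw [← pad_sum hD G]
  apply Finset.sum_congr rfl
  intro j _
  by_cases h : (j : ℕ) < Fintype.card ι
  · rw [if_pos h, dif_pos h]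
    have h2 : (⟨(j : ℕ) % Fintype.card ι, Nat.mod_lt _ Fintype.card_pos⟩ :
        Fin (Fintype.card ι)) = ⟨(j : ℕ), h⟩ := by
      apply Fin.ext
      simpa using Nat.mod_eq_of_lt h
    rw [h2]
  · rw [if_neg h, dif_neg h]

lemma isCompact_convexHull_of_isCompact {s : Set (Θ → ℝ)} (hs : IsCompact s) :
    IsCompact (convexHull ℝ s) := by
  classical
  set D := Fintype.card Θ + 1 with hD
  set f : (Fin D → ℝ) × (Fin D → (Θ → ℝ)) → (Θ → ℝ) :=
    fun p => ∑ i : Fin D, p.1 i • p.2 i with hf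
  have hfc : Continuous f := by
    apply continuous_finset_sum
    intro i _
    exact ((continuous_apply i).comp continuous_fst).smul
      ((continuous_apply i).comp continuous_snd)
  have hT : IsCompact ((stdSimplex ℝ (Fin D)) ×ˢ (Set.univ.pi fun _ : Fin D => s)) :=
    (isCompact_stdSimplex ℝ _).prod (isCompact_univ_pi fun _ => hs)
  have himg : convexHull ℝ s =
      f '' ((stdSimplex ℝ (Fin D)) ×ˢ (Set.univ.pi fun _ : Fin D => s)) := by
    apply Set.Subset.antisymm
    · intro x hx
      obtain ⟨ι, hι, z, w, hrange, hAI, hw0, hw1, hsum⟩ :=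
        eq_pos_convex_span_of_mem_convexHull hx
      have hne : Nonempty ι := by
        by_contra hne
        rw [not_nonempty_iff] at hne
        rw [Finset.univ_eq_empty, Finset.sum_empty] at hw1
        exact one_ne_zero hw1.symm
      have hkD : Fintype.card ι ≤ D := by
        have h1 := hAI.finrank_vectorSpan_add_one
        have h2 : Module.finrank ℝ (vectorSpan ℝ (Set.range z)) ≤ Module.finrank ℝ (Θ → ℝ) :=
          (vectorSpan ℝ (Set.range z)).finrank_le
        have h3 : Module.finrank ℝ (Θ → ℝ) = Fintype.card Θ := Module.finrank_pi ℝ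
        omega
      set e := Fintype.equivFin ι
      have hk0 : 0 < Fintype.card ι := Fintype.card_pos
      set idx : Fin D → ι := fun j =>
        e.symm ⟨(j : ℕ) % Fintype.card ι, Nat.mod_lt _ Fintype.card_pos⟩ with hidx
      set w' : Fin D → ℝ := fun j => if (j : ℕ) < Fintype.card ι then w (idx j) else 0 with hw'
      set z' : Fin D → (Θ → ℝ) := fun j => z (idx j) with hz'
      refine ⟨(w', z'), ⟨?_, fun i _ => hrange ⟨idx i, rfl⟩⟩, ?_⟩
      · constructor
        · intro j
          rw [hw']
          dsimp only
          split
          · exact (hw0 _).le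
          · exact le_refl 0
        · show ∑ j : Fin D, w' j = 1
          simp only [hw', hidx]
          rw [pad_sum' hkD w]
          exact hw1
      · show (∑ j : Fin D, w' j • z' j) = x
        have h2 : ∀ j : Fin D, w' j • z' j =
            (if (j : ℕ) < Fintype.card ι then (fun i => w i • z i) (idx j) else 0) := by
          intro j
          rw [hw', hz']
          dsimp only
          split
          · rfl
          · rw [zero_smul]
        rw [Finset.sum_congr rfl fun j _ => h2 j]
        simp only [hidx]
        rw [pad_sum' hkD (fun i => w i • z i)]
        exact hsum
    · rintro x ⟨⟨w, z⟩, ⟨hw, hz⟩, rfl⟩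
      have h1 : Finset.univ.centerMass w z ∈ convexHull ℝ s := by
        apply Finset.centerMass_mem_convexHull _ (fun i _ => hw.1 i) (by rw [hw.2]; norm_num)
        intro i _
        exact hz i (Set.mem_univ i)
      rwa [Finset.centerMass_eq_of_sum_1 _ _ hw.2] at h1
  rw [himg]
  exact hT.image hfc

end carath

/-! ### The sets K n, their intersection, and invariance -/

section structure1

variable (π ρ) in
def Ugen (X : Set (Θ → ℝ)) : Set (Θ → ℝ) :=
  {ν : Θ → ℝ | ∃ s : S, ∃ μ ∈ X, ν = update π ρ s μ}

variable (π ρ) in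
noncomputable def Kset (n : ℕ) : Set (Θ → ℝ) := (etaMap π ρ)^[n] (stdSimplex ℝ Θ)

lemma etaMap_def (X : Set (Θ → ℝ)) : etaMap π ρ X = convexHull ℝ (Ugen π ρ X) := rfl

lemma Ugen_mono {X Y : Set (Θ → ℝ)} (h : X ⊆ Y) : Ugen π ρ X ⊆ Ugen π ρ Y := by
  rintro ν ⟨s, μ, hμ, rfl⟩
  exact ⟨s, μ, h hμ, rfl⟩

lemma etaMap_mono {X Y : Set (Θ → ℝ)} (h : X ⊆ Y) : etaMap π ρ X ⊆ etaMap π ρ Y :=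
  convexHull_mono (Ugen_mono h)

lemma Ugen_eq_iUnion (X : Set (Θ → ℝ)) :
    Ugen π ρ X = ⋃ s : S, (update π ρ s) '' X := by
  ext ν
  simp only [Ugen, Set.mem_setOf_eq, Set.mem_iUnion, Set.mem_image]
  constructor
  · rintro ⟨s, μ, hμ, rfl⟩; exact ⟨s, μ, hμ, rfl⟩
  · rintro ⟨s, μ, hμ, rfl⟩; exact ⟨s, μ, hμ, rfl⟩

lemma Kset_zero : Kset π ρ 0 = stdSimplex ℝ Θ := rfl

lemma Kset_succ (n : ℕ) : Kset π ρ (n + 1) = etaMap π ρ (Kset π ρ n) :=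
  Function.iterate_succ_apply' _ _ _

lemma etaInf_def : etaInf π ρ = ⋂ n : ℕ, Kset π ρ (n + 1) := rfl

include H

lemma Hyp.Ugen_subset_simplex {X : Set (Θ → ℝ)} (hX : X ⊆ stdSimplex ℝ Θ) :
    Ugen π ρ X ⊆ stdSimplex ℝ Θ := by
  rintro ν ⟨s, μ, hμ, rfl⟩
  exact H.update_mem_simplex (hX hμ)

lemma Hyp.etaMap_subset_simplex {X : Set (Θ → ℝ)} (hX : X ⊆ stdSimplex ℝ Θ) :
    etaMap π ρ X ⊆ stdSimplex ℝ Θ :=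
  convexHull_min (H.Ugen_subset_simplex hX) (convex_stdSimplex ℝ Θ)

lemma Hyp.Kset_subset_simplex (n : ℕ) : Kset π ρ n ⊆ stdSimplex ℝ Θ := by
  induction n with
  | zero => exact subset_rfl
  | succ n ih => rw [Kset_succ]; exact H.etaMap_subset_simplex ih

lemma Hyp.Kset_succ_subset (n : ℕ) : Kset π ρ (n + 1) ⊆ Kset π ρ n := by
  induction n with
  | zero => rw [Kset_succ, Kset_zero]; exact H.etaMap_subset_simplex (H.Kset_subset_simplex 0)
  | succ n ih =>
    rw [Kset_succ (n + 1)]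
    calc etaMap π ρ (Kset π ρ (n + 1)) ⊆ etaMap π ρ (Kset π ρ n) := etaMap_mono ih
      _ = Kset π ρ (n + 1) := (Kset_succ n).symm

lemma Hyp.Kset_antitone : Antitone (Kset π ρ) :=
  antitone_nat_of_succ_le H.Kset_succ_subset

lemma Hyp.continuousOn_update (s : S) :
    ContinuousOn (update π ρ s) (stdSimplex ℝ Θ) := by
  apply continuousOn_pi'
  intro θ'
  have hmix : ∀ τ : Θ, Continuous fun μ : Θ → ℝ => mix ρ μ τ := by
    intro τ
    apply continuous_finset_sum
    intro θ _
    exact continuous_const.mul (continuous_apply θ)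
  have hnum : Continuous fun μ : Θ → ℝ => π s θ' * mix ρ μ θ' :=
    continuous_const.mul (hmix θ')
  have hden : Continuous fun μ : Θ → ℝ => Znorm π ρ s μ := by
    apply continuous_finset_sum
    intro θ'' _
    exact continuous_const.mul (hmix θ'')
  exact hnum.continuousOn.div hden.continuousOn
    (fun μ hμ => (H.Znorm_pos_of_simplex hμ).ne')

lemma Hyp.isCompact_Kset (n : ℕ) : IsCompact (Kset π ρ n) := by
  induction n with
  | zero => exact isCompact_stdSimplex ℝ Θ
  | succ n ih =>
    rw [Kset_succ, etaMap_def]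
    apply isCompact_convexHull_of_isCompact
    rw [Ugen_eq_iUnion]
    apply isCompact_iUnion
    intro s
    exact ih.image_of_continuousOn ((H.continuousOn_update s).mono (H.Kset_subset_simplex n))

lemma Hyp.isClosed_Kset (n : ℕ) : IsClosed (Kset π ρ n) := (H.isCompact_Kset n).isClosed

lemma Hyp.etaInf_subset_Kset (n : ℕ) : etaInf π ρ ⊆ Kset π ρ n := by
  refine Set.Subset.trans ?_ (H.Kset_succ_subset n)
  rw [etaInf_def]
  exact Set.iInter_subset _ n

lemma Hyp.etaInf_subset_simplex : etaInf π ρ ⊆ stdSimplex ℝ Θ := H.etaInf_subset_Kset 0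

omit H in
lemma convex_etaInf : Convex ℝ (etaInf π ρ) := by
  rw [etaInf_def]
  apply convex_iInter
  intro n
  rw [Kset_succ, etaMap_def]
  exact convex_convexHull ℝ _

lemma Hyp.isClosed_etaInf : IsClosed (etaInf π ρ) := by
  rw [etaInf_def]
  exact isClosed_iInter fun n => H.isClosed_Kset (n + 1)

lemma Hyp.update_mem_etaInf {s : S} {μ : Θ → ℝ} (hμ : μ ∈ etaInf π ρ) :
    update π ρ s μ ∈ etaInf π ρ := by
  rw [etaInf_def]
  refine Set.mem_iInter.2 fun n => ?_
  rw [Kset_succ, etaMap_def]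
  exact subset_convexHull ℝ _ ⟨s, μ, H.etaInf_subset_Kset n hμ, rfl⟩

lemma Hyp.updateSeq_mem_etaInf (l : List S) {μ : Θ → ℝ} (hμ : μ ∈ etaInf π ρ) :
    updateSeq π ρ l μ ∈ etaInf π ρ := by
  induction l generalizing μ with
  | nil => exact hμ
  | cons s l ih => exact ih (H.update_mem_etaInf hμ)

/-! ### The limit set of one-step images -/

omit H

variable (π ρ) in
noncomputable def Wset : Set (Θ → ℝ) := ⋂ n : ℕ, Ugen π ρ (Kset π ρ n)

include H

lemma Hyp.isCompact_UK (n : ℕ) : IsCompact (Ugen π ρ (Kset π ρ n)) := by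
  rw [Ugen_eq_iUnion]
  apply isCompact_iUnion
  intro s
  exact (H.isCompact_Kset n).image_of_continuousOn
    ((H.continuousOn_update s).mono (H.Kset_subset_simplex n))

lemma Hyp.isClosed_UK (n : ℕ) : IsClosed (Ugen π ρ (Kset π ρ n)) := (H.isCompact_UK n).isClosed

lemma Hyp.UK_succ_subset (n : ℕ) :
    Ugen π ρ (Kset π ρ (n + 1)) ⊆ Ugen π ρ (Kset π ρ n) :=
  Ugen_mono (H.Kset_succ_subset n)

lemma Hyp.isCompact_Wset : IsCompact (Wset π ρ) := by
  apply (H.isCompact_UK 0).of_isClosed_subset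
  · exact isClosed_iInter fun n => H.isClosed_UK n
  · exact Set.iInter_subset _ 0

/-- Every point of the limit set is a one-step update of a point of `etaInf`. -/
lemma Hyp.Wset_subset : Wset π ρ ⊆ Ugen π ρ (etaInf π ρ) := by
  intro z hz
  have hzn : ∀ n, ∃ s : S, ∃ μ ∈ Kset π ρ n, z = update π ρ s μ := fun n =>
    Set.mem_iInter.1 hz n
  choose f g hg hupdate using hzn
  obtain ⟨s0, hs0⟩ := Finite.exists_infinite_fiber f
  have hinf : (f ⁻¹' {s0} : Set ℕ).Infinite := Set.infinite_coe_iff.1 hs0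
  set C : ℕ → Set (Θ → ℝ) := fun n => Kset π ρ n ∩ (update π ρ s0) ⁻¹' {z} with hC
  have hCclosed : ∀ n, IsClosed (C n) := fun n =>
    ((H.continuousOn_update s0).mono (H.Kset_subset_simplex n)).preimage_isClosed_of_isClosed
      (H.isClosed_Kset n) isClosed_singleton
  have hCanti : ∀ n, C (n + 1) ⊆ C n := fun n μ hμ => ⟨H.Kset_succ_subset n hμ.1, hμ.2⟩
  have hCne : ∀ n, (C n).Nonempty := by
    intro n
    obtain ⟨m, hm, hnm⟩ := hinf.exists_gt n
    have hfm : f m = s0 := hm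
    refine ⟨g m, H.Kset_antitone hnm.le (hg m), ?_⟩
    simp only [Set.mem_preimage, Set.mem_singleton_iff]
    rw [← hfm]
    exact (hupdate m).symm
  have hCcompact : IsCompact (C 0) :=
    (H.isCompact_Kset 0).of_isClosed_subset (hCclosed 0) Set.inter_subset_left
  obtain ⟨μ, hμ⟩ := IsCompact.nonempty_iInter_of_sequence_nonempty_isCompact_isClosed
    C hCanti hCne hCcompact hCclosed
  rw [Set.mem_iInter] at hμ
  refine ⟨s0, μ, ?_, ?_⟩
  · rw [etaInf_def]
    exact Set.mem_iInter.2 fun n => (hμ (n + 1)).1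
  · have := (hμ 0).2
    simp only [Set.mem_preimage, Set.mem_singleton_iff] at this
    exact this.symm

/-- `etaInf` is contained in the convex hull of its one-step images. -/
lemma Hyp.etaInf_subset_hull :
    etaInf π ρ ⊆ convexHull ℝ (Ugen π ρ (etaInf π ρ)) := by
  intro x hx
  suffices hxW : x ∈ convexHull ℝ (Wset π ρ) by
    exact convexHull_mono H.Wset_subset hxW
  have hWc : IsCompact (convexHull ℝ (Wset π ρ)) :=
    isCompact_convexHull_of_isCompact H.isCompact_Wset
  rw [← hWc.isClosed.closure_eq, Metric.mem_closure_iff]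
  intro ε hε
  have key : ∃ n, Ugen π ρ (Kset π ρ n) ⊆ Metric.thickening (ε / 2) (Wset π ρ) := by
    by_contra hcon
    push_neg at hcon
    set T : ℕ → Set (Θ → ℝ) := fun n =>
      Ugen π ρ (Kset π ρ n) \ Metric.thickening (ε / 2) (Wset π ρ) with hT
    have hTne : ∀ n, (T n).Nonempty := by
      intro n
      obtain ⟨y, hy1, hy2⟩ := Set.not_subset.1 (hcon n)
      exact ⟨y, hy1, hy2⟩
    have hTanti : ∀ n, T (n + 1) ⊆ T n := fun n y hy => ⟨H.UK_succ_subset n hy.1, hy.2⟩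
    have hTclosed : ∀ n, IsClosed (T n) := fun n =>
      (H.isClosed_UK n).sdiff Metric.isOpen_thickening
    have hT0 : IsCompact (T 0) :=
      (H.isCompact_UK 0).of_isClosed_subset (hTclosed 0) Set.diff_subset
    obtain ⟨y, hy⟩ := IsCompact.nonempty_iInter_of_sequence_nonempty_isCompact_isClosed
      T hTanti hTne hT0 hTclosed
    rw [Set.mem_iInter] at hy
    have hyW : y ∈ Wset π ρ := Set.mem_iInter.2 fun n => (hy n).1
    exact (hy 0).2 (Metric.self_subset_thickening (by linarith) _ hyW)
  obtain ⟨n, hn⟩ := key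
  have hx1 : x ∈ convexHull ℝ (Ugen π ρ (Kset π ρ n)) := by
    rw [← etaMap_def, ← Kset_succ]
    exact H.etaInf_subset_Kset (n + 1) hx
  have hsub : Ugen π ρ (Kset π ρ n) ⊆ Wset π ρ + Metric.closedBall (0 : Θ → ℝ) (ε / 2) := by
    intro y hy
    obtain ⟨w0, hw0, hdist⟩ := Metric.mem_thickening_iff.1 (hn hy)
    refine Set.mem_add.2 ⟨w0, hw0, y - w0, ?_, by abel⟩
    rw [mem_closedBall_zero_iff, ← dist_eq_norm]
    exact hdist.le
  have hx2 : x ∈ convexHull ℝ (Wset π ρ) + Metric.closedBall (0 : Θ → ℝ) (ε / 2) := by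
    have h3 := convexHull_mono hsub hx1
    rw [convexHull_add] at h3
    rwa [Convex.convexHull_eq (convex_closedBall (0 : Θ → ℝ) (ε / 2))] at h3
  obtain ⟨b, hb, r, hr, hbr⟩ := Set.mem_add.1 hx2
  refine ⟨b, hb, ?_⟩
  rw [← hbr]
  calc dist (b + r) b = ‖r‖ := by rw [dist_eq_norm]; simp
    _ ≤ ε / 2 := mem_closedBall_zero_iff.1 hr
    _ < ε := by linarith

/-- one-step images of `etaInf` stay in `etaInf` -/
lemma Hyp.Ugen_etaInf_subset : Ugen π ρ (etaInf π ρ) ⊆ etaInf π ρ := by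
  rintro ν ⟨s, μ, hμ, rfl⟩
  exact H.update_mem_etaInf hμ

end structure1

/-! ### Updates of convex combinations, and reachability of extreme points -/

section reach

omit H in
lemma mix_apply (ρ : Θ → Θ → ℝ) (μ : Θ → ℝ) (τ : Θ) :
    mix ρ μ τ = ∑ θ, ρ θ τ * μ θ := rfl

include H

lemma Hyp.update_combo {ι : Type*} (s : S) (t : Finset ι) (w : ι → ℝ) (z : ι → Θ → ℝ)
    (hw0 : ∀ i ∈ t, 0 ≤ w i) (hw1 : ∑ i ∈ t, w i = 1)
    (hz : ∀ i ∈ t, z i ∈ stdSimplex ℝ Θ) :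
    ∃ w' : ι → ℝ, (∀ i ∈ t, 0 ≤ w' i) ∧ (∑ i ∈ t, w' i = 1) ∧
      update π ρ s (∑ i ∈ t, w i • z i) = ∑ i ∈ t, w' i • update π ρ s (z i) := by
  classical
  set Zt := ∑ i ∈ t, w i * Znorm π ρ s (z i) with hZt
  have hpd : 0 < pmin π * dmin ρ := mul_pos H.pmin_pos H.dmin_pos
  have hzpos : ∀ i ∈ t, pmin π * dmin ρ ≤ Znorm π ρ s (z i) := fun i hi => H.Znorm_ge (hz i hi)
  have h1 : ∑ i ∈ t, w i * (pmin π * dmin ρ) ≤ Zt :=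
    Finset.sum_le_sum fun i hi => mul_le_mul_of_nonneg_left (hzpos i hi) (hw0 i hi)
  rw [← Finset.sum_mul, hw1, one_mul] at h1
  have hZt0 : 0 < Zt := lt_of_lt_of_le hpd h1
  have hsum_apply : ∀ τ : Θ, (∑ i ∈ t, w i • z i) τ = ∑ i ∈ t, w i * z i τ := by
    intro τ
    rw [Finset.sum_apply]
    exact Finset.sum_congr rfl fun i _ => rfl
  have hmixlin : ∀ τ, mix ρ (∑ i ∈ t, w i • z i) τ = ∑ i ∈ t, w i * mix ρ (z i) τ := by
    intro τ
    simp only [mix_apply, hsum_apply]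
    calc ∑ θ, ρ θ τ * ∑ i ∈ t, w i * z i θ
        = ∑ θ, ∑ i ∈ t, ρ θ τ * (w i * z i θ) := by
          refine Finset.sum_congr rfl fun θ _ => ?_
          rw [Finset.mul_sum]
      _ = ∑ i ∈ t, ∑ θ, ρ θ τ * (w i * z i θ) := Finset.sum_comm
      _ = ∑ i ∈ t, w i * ∑ θ, ρ θ τ * z i θ := by
          refine Finset.sum_congr rfl fun i _ => ?_
          rw [Finset.mul_sum]
          exact Finset.sum_congr rfl fun θ _ => by ring
  have hZlin : Znorm π ρ s (∑ i ∈ t, w i • z i) = Zt := by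
    rw [hZt, Znorm]
    calc ∑ τ, π s τ * mix ρ (∑ i ∈ t, w i • z i) τ
        = ∑ τ, ∑ i ∈ t, π s τ * (w i * mix ρ (z i) τ) := by
          refine Finset.sum_congr rfl fun τ _ => ?_
          rw [hmixlin τ, Finset.mul_sum]
      _ = ∑ i ∈ t, ∑ τ, π s τ * (w i * mix ρ (z i) τ) := Finset.sum_comm
      _ = ∑ i ∈ t, w i * Znorm π ρ s (z i) := by
          refine Finset.sum_congr rfl fun i _ => ?_
          rw [Znorm, Finset.mul_sum]
          exact Finset.sum_congr rfl fun τ _ => by ring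
  refine ⟨fun i => w i * Znorm π ρ s (z i) / Zt, ?_, ?_, ?_⟩
  · intro i hi
    exact div_nonneg (mul_nonneg (hw0 i hi) (lt_of_lt_of_le hpd (hzpos i hi)).le) hZt0.le
  · rw [← Finset.sum_div, ← hZt, div_self hZt0.ne']
  · funext τ
    rw [update_apply, hZlin, hmixlin, Finset.sum_apply]
    rw [Finset.mul_sum, Finset.sum_div]
    refine Finset.sum_congr rfl fun i hi => ?_
    have hZi : Znorm π ρ s (z i) ≠ 0 := (lt_of_lt_of_le hpd (hzpos i hi)).ne'
    show π s τ * (w i * mix ρ (z i) τ) / Zt = (w i * Znorm π ρ s (z i) / Zt) • update π ρ s (z i) τ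
    rw [update_apply, smul_eq_mul]
    field_simp

lemma Hyp.updateSeq_combo {ι : Type*} (l : List S) (t : Finset ι) (w : ι → ℝ) (z : ι → Θ → ℝ)
    (hw0 : ∀ i ∈ t, 0 ≤ w i) (hw1 : ∑ i ∈ t, w i = 1)
    (hz : ∀ i ∈ t, z i ∈ stdSimplex ℝ Θ) :
    ∃ w' : ι → ℝ, (∀ i ∈ t, 0 ≤ w' i) ∧ (∑ i ∈ t, w' i = 1) ∧
      updateSeq π ρ l (∑ i ∈ t, w i • z i) = ∑ i ∈ t, w' i • updateSeq π ρ l (z i) := by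
  induction l generalizing w z with
  | nil => exact ⟨w, hw0, hw1, rfl⟩
  | cons s l ih =>
    obtain ⟨w1, hw10, hw11, heq⟩ := H.update_combo s t w z hw0 hw1 hz
    obtain ⟨w2, hw20, hw21, heq2⟩ := ih w1 (fun i => update π ρ s (z i)) hw10 hw11
      (fun i hi => H.update_mem_simplex (hz i hi))
    refine ⟨w2, hw20, hw21, ?_⟩
    rw [updateSeq_cons, heq]
    exact heq2

omit H in
lemma eq_of_extreme_combo {C : Set (Θ → ℝ)} (hC : Convex ℝ C) {x : Θ → ℝ}
    (hx : x ∈ C.extremePoints ℝ) {ι : Type*} (t : Finset ι) (w : ι → ℝ) (p : ι → Θ → ℝ)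
    (hw0 : ∀ i ∈ t, 0 ≤ w i) (hw1 : ∑ i ∈ t, w i = 1) (hp : ∀ i ∈ t, p i ∈ C)
    (hsum : ∑ i ∈ t, w i • p i = x) : ∃ i ∈ t, 0 < w i ∧ p i = x := by
  classical
  set t' := t.filter (fun i => w i ≠ 0) with ht'
  have ht'sub : t' ⊆ t := Finset.filter_subset _ _
  have hw1' : ∑ i ∈ t', w i = 1 := by
    rw [ht', Finset.sum_filter_ne_zero]
    exact hw1
  have hsum' : ∑ i ∈ t', w i • p i = x := by
    rw [ht', Finset.sum_filter_of_ne]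
    · exact hsum
    · intro i hi hne hwi
      exact hne (by rw [hwi, zero_smul])
  have hxhull : x ∈ convexHull ℝ (↑(t'.image p) : Set (Θ → ℝ)) := by
    rw [← hsum']
    have h2 := Finset.centerMass_mem_convexHull (t := t') (w := w) (z := p)
      (fun i hi => hw0 i (ht'sub hi)) (by rw [hw1']; norm_num)
      (fun i hi => Finset.mem_coe.2 (Finset.mem_image_of_mem p hi))
    rwa [Finset.centerMass_eq_of_sum_1 _ _ hw1'] at h2
  have hhullC : (↑(t'.image p) : Set (Θ → ℝ)) ⊆ C := by
    intro y hy
    simp only [Finset.coe_image, Set.mem_image, Finset.mem_coe] at hy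
    obtain ⟨i, hi, rfl⟩ := hy
    exact hp i (ht'sub hi)
  have hsubC : convexHull ℝ (↑(t'.image p) : Set (Θ → ℝ)) ⊆ C := convexHull_min hhullC hC
  have hxext : x ∈ (convexHull ℝ (↑(t'.image p) : Set (Θ → ℝ))).extremePoints ℝ := by
    rw [mem_extremePoints]
    exact ⟨hxhull, fun x₁ hx₁ x₂ hx₂ hseg => (mem_extremePoints.1 hx).2 x₁ (hsubC hx₁) x₂ (hsubC hx₂) hseg⟩
  have h3 := extremePoints_convexHull_subset hxext
  simp only [Finset.coe_image, Set.mem_image, Finset.mem_coe] at h3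
  obtain ⟨i, hi, hpi⟩ := h3
  have hwi := (Finset.mem_filter.1 hi).2
  exact ⟨i, ht'sub hi, lt_of_le_of_ne (hw0 i (ht'sub hi)) (Ne.symm hwi), hpi⟩

/-- every extreme point of `etaInf` is exactly reachable in `n` steps from some
point of `etaInf`, for every `n` -/
lemma Hyp.reach (n : ℕ) :
    ∀ μ ∈ (etaInf π ρ).extremePoints ℝ, ∃ (l : List S) (ν : Θ → ℝ),
      l.length = n ∧ ν ∈ etaInf π ρ ∧ μ = updateSeq π ρ l ν := by
  induction n with
  | zero => exact fun μ hμ => ⟨[], μ, rfl, hμ.1, rfl⟩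
  | succ n ih =>
    intro μ hμ
    obtain ⟨l, ν, hlen, hν, heq⟩ := ih μ hμ
    have hν2 : ν ∈ convexHull ℝ (Ugen π ρ (etaInf π ρ)) := H.etaInf_subset_hull hν
    rw [_root_.convexHull_eq] at hν2
    obtain ⟨ι, t, w, z, hw0, hw1, hz, hcm⟩ := hν2
    rw [Finset.centerMass_eq_of_sum_1 _ _ hw1] at hcm
    have hzsimplex : ∀ i ∈ t, z i ∈ stdSimplex ℝ Θ := fun i hi =>
      H.etaInf_subset_simplex (H.Ugen_etaInf_subset (hz i hi))
    obtain ⟨w', hw'0, hw'1, heq'⟩ := H.updateSeq_combo l t w z hw0 hw1 hzsimplex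
    rw [hcm] at heq'
    have hpoints : ∀ i ∈ t, updateSeq π ρ l (z i) ∈ etaInf π ρ := fun i hi =>
      H.updateSeq_mem_etaInf l (H.Ugen_etaInf_subset (hz i hi))
    obtain ⟨i, hi, hwi, hpi⟩ := eq_of_extreme_combo convex_etaInf hμ t w'
      (fun i => updateSeq π ρ l (z i)) hw'0 hw'1 hpoints (by rw [← heq']; exact heq.symm)
    obtain ⟨s', ν', hν', hzi⟩ := hz i hi
    refine ⟨s' :: l, ν', by simp [hlen], hν', ?_⟩
    rw [updateSeq_cons, ← hzi]
    exact hpi.symm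

end reach

-- PART6HERE

end LemD2

theorem uniform_approach_to_extreme_points_aux
    {Θ S : Type*} [Fintype Θ] [Nonempty Θ] [Fintype S] [Nonempty S]
    (π : S → Θ → ℝ) (hπ0 : ∀ s θ, 0 < π s θ) (hπ1 : ∀ θ, ∑ s, π s θ = 1)
    (ρ : Θ → Θ → ℝ) (hρ0 : ∀ θ θ', 0 < ρ θ θ') (hρ1 : ∀ θ, ∑ θ', ρ θ θ' = 1) :
    ∀ ε : ℝ, 0 < ε → ∃ n : ℕ,
      ∀ μ ∈ (etaInf π ρ).extremePoints ℝ,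
        ∃ l : List S, l.length = n ∧
          ∀ μ' ∈ stdSimplex ℝ Θ,
            Real.sqrt (∑ θ, (updateSeq π ρ l μ' θ - μ θ) ^ 2) < ε := by
  intro ε hε
  have H : LemD2.Hyp π ρ := ⟨hπ0, hπ1, hρ0, hρ1⟩
  have hc0 : 0 < LemD2.cmin π ρ := H.cmin_pos
  set R0 : ℝ := 1 / LemD2.cmin π ρ ^ 2 with hR0def
  have hR00 : 0 < R0 := by positivity
  have hsq0 : 0 ≤ Real.sqrt (Fintype.card Θ) := Real.sqrt_nonneg _
  set e : ℝ := ε / (2 * (Real.sqrt (Fintype.card Θ) + 1)) with hedef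
  have he0 : 0 < e := by
    rw [hedef]
    positivity
  have hδ0 : 0 < LemD2.dmin ρ := H.dmin_pos
  have hδ1 : LemD2.dmin ρ ≤ 1 := H.dmin_le_one
  obtain ⟨N, hN⟩ := exists_pow_lt_of_lt_one (div_pos he0 hR00)
    (show 1 - LemD2.dmin ρ < 1 by linarith)
  refine ⟨N + 1, ?_⟩
  intro μ hμ
  obtain ⟨l, ν, hlen, hν, hμeq⟩ := H.reach (N + 1) μ hμ
  refine ⟨l, hlen, ?_⟩
  intro μ' hμ'
  obtain ⟨a, ltail, rfl⟩ : ∃ a ltail, l = a :: ltail := by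
    cases l with
    | nil => simp at hlen
    | cons a t => exact ⟨a, t, rfl⟩
  have hlt : ltail.length = N := by simpa using hlen
  have hνS : ν ∈ stdSimplex ℝ Θ := H.etaInf_subset_simplex hν
  have hx1S : update π ρ a μ' ∈ stdSimplex ℝ Θ := H.update_mem_simplex hμ'
  have hy1S : update π ρ a ν ∈ stdSimplex ℝ Θ := H.update_mem_simplex hνS
  have hx1pos : ∀ θ, 0 < update π ρ a μ' θ := fun θ =>
    lt_of_lt_of_le hc0 (H.cmin_le_update hμ' θ)
  have hy1pos : ∀ θ, 0 < update π ρ a ν θ := fun θ =>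
    lt_of_lt_of_le hc0 (H.cmin_le_update hνS θ)
  have hinit : LemD2.Rrat (update π ρ a μ') (update π ρ a ν) ≤ R0 := H.init_R hμ' hνS a
  have hcontr := H.contract_seq ltail hx1pos hy1pos
  rw [hlt] at hcontr
  have h2 : (1 - LemD2.dmin ρ) ^ N * (LemD2.Rrat (update π ρ a μ') (update π ρ a ν) - 1) ≤
      (1 - LemD2.dmin ρ) ^ N * R0 := by
    apply mul_le_mul_of_nonneg_left _ (pow_nonneg (by linarith) N)
    linarith [hinit]
  have h3 : (1 - LemD2.dmin ρ) ^ N * R0 < e := (lt_div_iff₀ hR00).1 hN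
  have hRf : LemD2.Rrat (updateSeq π ρ ltail (update π ρ a μ'))
      (updateSeq π ρ ltail (update π ρ a ν)) ≤ 1 + e := by linarith [hcontr, h2, h3]
  have hclose := H.close_of_R (H.updateSeq_mem_simplex ltail hx1S)
    (H.updateSeq_mem_simplex ltail hy1S) (H.updateSeq_pos ltail hx1pos)
    (H.updateSeq_pos ltail hy1pos) he0.le hRf
  have hxf_eq : updateSeq π ρ ltail (update π ρ a μ') = updateSeq π ρ (a :: ltail) μ' := rfl
  have hyf_eq : updateSeq π ρ ltail (update π ρ a ν) = μ := by rw [hμeq]; rfl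
  have hclose' : ∀ θ, |updateSeq π ρ (a :: ltail) μ' θ - μ θ| ≤ e := by
    intro θ
    have := hclose θ
    rwa [hxf_eq, hyf_eq] at this
  have hsum : ∑ θ, (updateSeq π ρ (a :: ltail) μ' θ - μ θ) ^ 2 ≤ (Fintype.card Θ : ℝ) * e ^ 2 := by
    calc ∑ θ, (updateSeq π ρ (a :: ltail) μ' θ - μ θ) ^ 2 ≤ ∑ _θ : Θ, e ^ 2 := by
          apply Finset.sum_le_sum
          intro θ _
          have h := abs_le.1 (hclose' θ)
          exact sq_le_sq' h.1 h.2
      _ = (Fintype.card Θ : ℝ) * e ^ 2 := by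
          rw [Finset.sum_const, nsmul_eq_mul]
          simp
  calc Real.sqrt (∑ θ, (updateSeq π ρ (a :: ltail) μ' θ - μ θ) ^ 2)
      ≤ Real.sqrt ((Fintype.card Θ : ℝ) * e ^ 2) := Real.sqrt_le_sqrt hsum
    _ = Real.sqrt (Fintype.card Θ : ℝ) * e := by
        rw [Real.sqrt_mul (by positivity), Real.sqrt_sq he0.le]
    _ < (Real.sqrt (Fintype.card Θ : ℝ) + 1) * e := by nlinarith [he0, hsq0]
    _ = ε / 2 := by
        rw [hedef]
        have h4 : Real.sqrt (Fintype.card Θ : ℝ) + 1 ≠ 0 := by positivity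
        field_simp
    _ < ε := by linarith


/-- Lemma D.2: for any ε > 0 there exists n ∈ ℕ (uniform over extreme
points) such that for every extreme point μ of η^∞_{ρ,Π} there is a sequence of n
signals s^n with ‖r_{ρ,Π}(s^n|μ') − μ‖ < ε (Euclidean norm) for every initial belief
μ' ∈ Δ(Θ). -/
theorem uniform_approach_to_extreme_points
    {Θ S : Type*} [Fintype Θ] [Nonempty Θ] [Fintype S] [Nonempty S]
    (π : S → Θ → ℝ) (hπ0 : ∀ s θ, 0 < π s θ) (hπ1 : ∀ θ, ∑ s, π s θ = 1)
    (ρ : Θ → Θ → ℝ) (hρ0 : ∀ θ θ', 0 < ρ θ θ') (hρ1 : ∀ θ, ∑ θ', ρ θ θ' = 1) :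
    ∀ ε : ℝ, 0 < ε → ∃ n : ℕ,
      ∀ μ ∈ (etaInf π ρ).extremePoints ℝ,
        ∃ l : List S, l.length = n ∧
          ∀ μ' ∈ stdSimplex ℝ Θ,
            Real.sqrt (∑ θ, (updateSeq π ρ l μ' θ - μ θ) ^ 2) < ε :=
  uniform_approach_to_extreme_points_aux π hπ0 hπ1 ρ hρ0 hρ1
end

section
/- Suppose the experiment Π = (S, π) is a weighted garbling of the experiment Π' = (S', π'), and assume bounded beliefs for both experiments with respect to the transition ρ (π(s|θ) > 0, π'(s'|θ) > 0 and ρ(θ'|θ) > 0 for all arguments). Then η^∞_{ρ,Π} ⊆ η^∞_{ρ,Π'}. -/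
set_option linter.unusedSectionVars false
set_option linter.unusedVariables false

section Aux
variable {Θ : Type*} [Fintype Θ] [Nonempty Θ]

lemma nu_pos (ρ : Θ → Θ → ℝ) (hρ0 : ∀ θ θ', 0 < ρ θ θ') {μ : Θ → ℝ}
    (hμ : μ ∈ stdSimplex ℝ Θ) (θ' : Θ) : 0 < ∑ θ, ρ θ θ' * μ θ := by
  obtain ⟨hμ0, hμ1⟩ := hμ
  have h : ∑ θ : Θ, (0:ℝ) < ∑ θ, μ θ := by simp [hμ1]
  obtain ⟨θ0, -, hθ0⟩ := Finset.exists_lt_of_sum_lt h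
  exact Finset.sum_pos' (fun θ _ => mul_nonneg (hρ0 θ θ').le (hμ0 θ))
    ⟨θ0, Finset.mem_univ θ0, mul_pos (hρ0 θ0 θ') hθ0⟩

lemma denom_pos {S : Type*} [Fintype S] (π : S → Θ → ℝ) (hπ0 : ∀ s θ, 0 < π s θ)
    (ρ : Θ → Θ → ℝ) (hρ0 : ∀ θ θ', 0 < ρ θ θ') {μ : Θ → ℝ}
    (hμ : μ ∈ stdSimplex ℝ Θ) (s : S) :
    0 < ∑ θ'', π s θ'' * ∑ θ, ρ θ θ'' * μ θ :=
  Finset.sum_pos (fun θ'' _ => mul_pos (hπ0 s θ'') (nu_pos ρ hρ0 hμ θ''))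
    Finset.univ_nonempty

lemma update_mem_stdSimplex {S : Type*} [Fintype S] (π : S → Θ → ℝ)
    (hπ0 : ∀ s θ, 0 < π s θ) (ρ : Θ → Θ → ℝ) (hρ0 : ∀ θ θ', 0 < ρ θ θ')
    {μ : Θ → ℝ} (hμ : μ ∈ stdSimplex ℝ Θ) (s : S) :
    update π ρ s μ ∈ stdSimplex ℝ Θ := by
  have hD := denom_pos π hπ0 ρ hρ0 hμ s
  constructor
  · intro θ'
    exact div_nonneg (mul_nonneg (hπ0 s θ').le (nu_pos ρ hρ0 hμ θ').le) hD.le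
  · simp only [update]
    rw [← Finset.sum_div, div_self hD.ne']

lemma etaMap_subset_stdSimplex {S : Type*} [Fintype S] (π : S → Θ → ℝ)
    (hπ0 : ∀ s θ, 0 < π s θ) (ρ : Θ → Θ → ℝ) (hρ0 : ∀ θ θ', 0 < ρ θ θ')
    {X : Set (Θ → ℝ)} (hX : X ⊆ stdSimplex ℝ Θ) :
    etaMap π ρ X ⊆ stdSimplex ℝ Θ := by
  apply convexHull_min _ (convex_stdSimplex ℝ Θ)
  rintro ν ⟨s, μ, hμ, rfl⟩
  exact update_mem_stdSimplex π hπ0 ρ hρ0 (hX hμ) s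

lemma etaMap_mono {S : Type*} [Fintype S] (π : S → Θ → ℝ) (ρ : Θ → Θ → ℝ)
    {X Y : Set (Θ → ℝ)} (hXY : X ⊆ Y) : etaMap π ρ X ⊆ etaMap π ρ Y := by
  apply convexHull_mono
  rintro ν ⟨s, μ, hμ, rfl⟩
  exact ⟨s, μ, hXY hμ, rfl⟩

end Aux

lemma update_mem_convexHull_updates
    {Θ S S' : Type*} [Fintype Θ] [Nonempty Θ] [Fintype S] [Fintype S']
    (π : S → Θ → ℝ) (hπ0 : ∀ s θ, 0 < π s θ)
    (π' : S' → Θ → ℝ) (hπ'0 : ∀ s' θ, 0 < π' s' θ)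
    (ρ : Θ → Θ → ℝ) (hρ0 : ∀ θ θ', 0 < ρ θ θ')
    (γ : S' → ℝ) (hγ0 : ∀ s', 0 ≤ γ s')
    (φ : S' → S → ℝ) (hφ0 : ∀ s' s, 0 ≤ φ s' s)
    (hwg : ∀ s θ, π s θ = ∑ s', φ s' s * γ s' * π' s' θ)
    {μ : Θ → ℝ} (hμ : μ ∈ stdSimplex ℝ Θ) (s : S) :
    update π ρ s μ ∈ convexHull ℝ {ν : Θ → ℝ | ∃ s' : S', ν = update π' ρ s' μ} := by
  set ν : Θ → ℝ := fun θ'' => ∑ θ, ρ θ θ'' * μ θ with hν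
  have hν0 : ∀ θ'', 0 < ν θ'' := fun θ'' => nu_pos ρ hρ0 hμ θ''
  set D : ℝ := ∑ θ'', π s θ'' * ν θ'' with hDdef
  have hD : 0 < D := denom_pos π hπ0 ρ hρ0 hμ s
  set D' : S' → ℝ := fun s' => ∑ θ'', π' s' θ'' * ν θ'' with hD'def
  have hD' : ∀ s', 0 < D' s' := fun s' => denom_pos π' hπ'0 ρ hρ0 hμ s'
  set w : S' → ℝ := fun s' => φ s' s * γ s' * D' s' / D with hwdef
  have hw0 : ∀ s', 0 ≤ w s' :=
    fun s' => div_nonneg (mul_nonneg (mul_nonneg (hφ0 s' s) (hγ0 s')) (hD' s').le) hD.le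
  have key : ∑ s', φ s' s * γ s' * D' s' = D := by
    calc ∑ s', φ s' s * γ s' * D' s'
        = ∑ s', ∑ θ'', φ s' s * γ s' * (π' s' θ'' * ν θ'') := by
          simp_rw [hD'def, Finset.mul_sum]
      _ = ∑ θ'', ∑ s', φ s' s * γ s' * π' s' θ'' * ν θ'' := by
          rw [Finset.sum_comm]; simp_rw [mul_assoc]
      _ = D := by
          rw [hDdef]
          refine Finset.sum_congr rfl fun θ'' _ => ?_
          rw [← Finset.sum_mul, ← hwg]
  have hws : ∑ s', w s' = 1 := by
    simp_rw [hwdef, ← Finset.sum_div, key, div_self hD.ne']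
  have hpt : update π ρ s μ = ∑ s', w s' • update π' ρ s' μ := by
    funext θ'
    simp only [Finset.sum_apply, Pi.smul_apply, smul_eq_mul, update, hwdef]
    rw [eq_comm]
    calc ∑ s', φ s' s * γ s' * D' s' / D * (π' s' θ' * ν θ' / D' s')
        = ∑ s', φ s' s * γ s' * π' s' θ' * ν θ' / D := by
          refine Finset.sum_congr rfl fun s' _ => ?_
          field_simp [hD.ne', (hD' s').ne']
      _ = π s θ' * ν θ' / D := by
          rw [← Finset.sum_div, ← Finset.sum_mul, ← hwg]
  rw [hpt, ← Finset.centerMass_eq_of_sum_1 _ _ hws]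
  exact Finset.centerMass_mem_convexHull _ (fun s' _ => hw0 s') (by rw [hws]; norm_num)
    (fun s' _ => ⟨s', rfl⟩)

/-- if Π is a weighted garbling of Π' and beliefs are bounded for both
experiments with respect to the transition ρ, then η^∞_{ρ,Π} ⊆ η^∞_{ρ,Π'}. -/
theorem etaInf_subset_of_weighted_garbling
    {Θ S S' : Type*} [Fintype Θ] [Nonempty Θ]
    [Fintype S] [Nonempty S] [Fintype S'] [Nonempty S']
    (π : S → Θ → ℝ) (hπ0 : ∀ s θ, 0 < π s θ) (hπ1 : ∀ θ, ∑ s, π s θ = 1)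
    (π' : S' → Θ → ℝ) (hπ'0 : ∀ s' θ, 0 < π' s' θ) (hπ'1 : ∀ θ, ∑ s', π' s' θ = 1)
    (ρ : Θ → Θ → ℝ) (hρ0 : ∀ θ θ', 0 < ρ θ θ') (hρ1 : ∀ θ, ∑ θ', ρ θ θ' = 1)
    -- Π is a weighted garbling of Π'
    (γ : S' → ℝ) (hγ0 : ∀ s', 0 ≤ γ s') (hγ1 : ∀ θ, ∑ s', γ s' * π' s' θ = 1)
    (φ : S' → S → ℝ) (hφ0 : ∀ s' s, 0 ≤ φ s' s) (hφ1 : ∀ s', ∑ s, φ s' s = 1)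
    (hwg : ∀ s θ, π s θ = ∑ s', φ s' s * γ s' * π' s' θ) :
    etaInf π ρ ⊆ etaInf π' ρ := by
  have hstep : ∀ X : Set (Θ → ℝ), X ⊆ stdSimplex ℝ Θ →
      etaMap π ρ X ⊆ etaMap π' ρ X := by
    intro X hX
    apply convexHull_min _ (convex_convexHull ℝ _)
    rintro ν ⟨s, μ, hμX, rfl⟩
    have h := update_mem_convexHull_updates π hπ0 π' hπ'0 ρ hρ0 γ hγ0 φ hφ0 hwg
      (hX hμX) s
    refine convexHull_mono ?_ h
    rintro ν' ⟨s', rfl⟩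
    exact ⟨s', μ, hμX, rfl⟩
  have hiter : ∀ n, (etaMap π ρ)^[n+1] (stdSimplex ℝ Θ) ⊆
      (etaMap π' ρ)^[n+1] (stdSimplex ℝ Θ) ∧
      (etaMap π' ρ)^[n+1] (stdSimplex ℝ Θ) ⊆ stdSimplex ℝ Θ := by
    intro n
    induction n with
    | zero =>
      simp only [zero_add, Function.iterate_one]
      exact ⟨hstep _ (subset_refl _), etaMap_subset_stdSimplex π' hπ'0 ρ hρ0 (subset_refl _)⟩
    | succ n ih =>
      simp only [Function.iterate_succ_apply'] at ih ⊢
      exact ⟨(etaMap_mono π ρ ih.1).trans (hstep _ ih.2),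
        etaMap_subset_stdSimplex π' hπ'0 ρ hρ0 ih.2⟩
  intro x hx
  simp only [etaInf, Set.mem_iInter] at hx ⊢
  exact fun n => (hiter n).1 (hx n)
end
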